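/- arXiv:math/0605384 — 3 statements merged into one kernel-verified Lean document; each statement's English description precedes it below -/
import Mathlib

section
/- Suppose M satisfies conditions (*) and (**) and λ ≠ 0. If the tuple M acts irreducibly on V (i.e. no subspace of V other than 0 and V is invariant under all M_k), then the middle convolution MC_λ(M) acts irreducibly on V^r/(K + L): no subspace of V^r/(K + L) other than 0 and the whole space is invariant under all Ñ_k. -/
open Module LinearMap Submodule

/-- The coefficient endomorphism appearing in the `k`-th row of the convolution
operator `N_k`. -/
noncomputable def convCoeff {V : Type*} [AddCommGroup V] [Module ℂ V] {r : ℕ}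
    (M : Fin r → Module.End ℂ V) (lam : ℂ) (k i : Fin r) : Module.End ℂ V :=
  if i < k then M i - 1 else if i = k then lam • M k else lam • (M i - 1)

/-- The convolution operator `N_k` on `V^r`: it leaves every component `v_j` with
`j ≠ k` unchanged and replaces the `k`-th component by
`(M_1 − 1)v_1 + ⋯ + (M_{k−1} − 1)v_{k−1} + λ M_k v_k + λ(M_{k+1} − 1)v_{k+1} + ⋯ + λ(M_r − 1)v_r`. -/
noncomputable def convOp {V : Type*} [AddCommGroup V] [Module ℂ V] {r : ℕ}
    (M : Fin r → Module.End ℂ V) (lam : ℂ) (k : Fin r) :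
    Module.End ℂ (Fin r → V) :=
  LinearMap.pi fun j =>
    if j = k then ∑ i : Fin r, convCoeff M lam k i ∘ₗ LinearMap.proj i
    else LinearMap.proj j

/-- The subspace `K_k = {(0,…,0,u,0,…,0)ᵀ : u ∈ ker(M_k − 1)}` (`u` in the `k`-th slot). -/
noncomputable def Ksub {V : Type*} [AddCommGroup V] [Module ℂ V] {r : ℕ}
    (M : Fin r → Module.End ℂ V) (k : Fin r) : Submodule ℂ (Fin r → V) :=
  Submodule.pi Set.univ fun j => if j = k then LinearMap.ker (M k - 1) else ⊥

/-- The subspace `L = ⋂_k ker(N_k − 1)`. -/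
noncomputable def Lsub {V : Type*} [AddCommGroup V] [Module ℂ V] {r : ℕ}
    (M : Fin r → Module.End ℂ V) (lam : ℂ) : Submodule ℂ (Fin r → V) :=
  ⨅ k : Fin r, LinearMap.ker (convOp M lam k - 1)

/-- The subspace `K + L` with `K = K_1 ⊕ ⋯ ⊕ K_r`. -/
noncomputable def KLsub {V : Type*} [AddCommGroup V] [Module ℂ V] {r : ℕ}
    (M : Fin r → Module.End ℂ V) (lam : ℂ) : Submodule ℂ (Fin r → V) :=
  (⨆ k : Fin r, Ksub M k) ⊔ Lsub M lam

/-- The middle convolution operator `Ñ_k` induced by `N_k` on `V^r/(K + L)`. -/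
noncomputable def mcOp {V : Type*} [AddCommGroup V] [Module ℂ V] {r : ℕ}
    (M : Fin r → Module.End ℂ V) (lam : ℂ)
    (h : ∀ k : Fin r, KLsub M lam ≤ (KLsub M lam).comap (convOp M lam k))
    (k : Fin r) : Module.End ℂ ((Fin r → V) ⧸ KLsub M lam) :=
  Submodule.mapQ _ _ (convOp M lam k) (h k)

/-- Condition (*): there is no nonzero `v ∈ V` fixed by all `M_j`, `j ≠ i`, which is an
eigenvector of `M_i`. -/
def CondStar {V : Type*} [AddCommGroup V] [Module ℂ V] {r : ℕ}
    (M : Fin r → Module.End ℂ V) : Prop :=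
  ∀ i : Fin r,
    ¬ ∃ v : V, v ≠ 0 ∧ (∀ j : Fin r, j ≠ i → M j v = v) ∧ ∃ a : ℂ, M i v = a • v

/-- Condition (**): there is no codimension-one subspace `W ⊆ V` invariant under all `M_j`
with `(M_j − 1)(V) ⊆ W` for all `j ≠ i`. -/
def CondStarStar {V : Type*} [AddCommGroup V] [Module ℂ V] {r : ℕ}
    (M : Fin r → Module.End ℂ V) : Prop :=
  ∀ i : Fin r,
    ¬ ∃ W : Submodule ℂ V, Module.finrank ℂ (V ⧸ W) = 1 ∧
      (∀ j : Fin r, W.map (M j) ≤ W) ∧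
      ∀ j : Fin r, j ≠ i → LinearMap.range (M j - 1) ≤ W

section Aux

set_option linter.unusedSectionVars false

variable {V : Type*} [AddCommGroup V] [Module ℂ V] {r : ℕ}
  (M : Fin r → Module.End ℂ V) (lam : ℂ)

/-- `S(x) = Σ_j (M_j − 1) x_j`. -/
noncomputable def sTot (x : Fin r → V) : V := ∑ j, (M j - 1) (x j)

/-- `S_{<k}(x) = Σ_{j<k} (M_j − 1) x_j`. -/
noncomputable def sLt (k : Fin r) (x : Fin r → V) : V :=
  ∑ j ∈ Finset.Iio k, (M j - 1) (x j)

/-- `S_{>k}(x) = Σ_{j>k} (M_j − 1) x_j`. -/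
noncomputable def sGt (k : Fin r) (x : Fin r → V) : V :=
  ∑ j ∈ Finset.Ioi k, (M j - 1) (x j)

lemma univ_split (k : Fin r) (f : Fin r → V) :
    ∑ i, f i = ∑ i ∈ Finset.Iio k, f i + f k + ∑ i ∈ Finset.Ioi k, f i := by
  have h1 : (Finset.univ : Finset (Fin r)) = Finset.Iio k ∪ Finset.Ici k := by
    ext i; simp [lt_or_ge]
  have h2 : Disjoint (Finset.Iio k) (Finset.Ici k) := by
    simp only [Finset.disjoint_left, Finset.mem_Iio, Finset.mem_Ici]
    intro a ha hb; exact absurd hb (not_le.2 ha)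
  rw [h1, Finset.sum_union h2, ← Finset.Ioi_insert, Finset.sum_insert (by simp), add_assoc]

lemma sTot_split (k : Fin r) (x : Fin r → V) :
    sTot M x = sLt M k x + ((M k) (x k) - x k) + sGt M k x := by
  have := univ_split (V := V) k (fun j => (M j - 1) (x j))
  simpa [sTot, sLt, sGt, LinearMap.sub_apply, Module.End.one_apply] using this

lemma convOp_apply_ne {k j : Fin r} (hj : j ≠ k) (x : Fin r → V) :
    convOp M lam k x j = x j := by
  simp [convOp, LinearMap.pi_apply, hj]

lemma convOp_apply_self (k : Fin r) (x : Fin r → V) :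
    convOp M lam k x k = sLt M k x + lam • (M k) (x k) + lam • sGt M k x := by
  rw [convOp, LinearMap.pi_apply, if_pos rfl, LinearMap.sum_apply]
  simp only [LinearMap.comp_apply, LinearMap.proj_apply]
  rw [univ_split k]
  congr 1
  · congr 1
    · refine Finset.sum_congr rfl fun i hi => ?_
      rw [Finset.mem_Iio] at hi
      rw [convCoeff, if_pos hi]
    · rw [convCoeff, if_neg (lt_irrefl k), if_pos rfl, LinearMap.smul_apply]
  · rw [sGt, Finset.smul_sum]
    refine Finset.sum_congr rfl fun i hi => ?_
    rw [Finset.mem_Ioi] at hi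
    rw [convCoeff, if_neg (not_lt.2 hi.le), if_neg hi.ne', LinearMap.smul_apply]

lemma convOp_sub (k : Fin r) (x : Fin r → V) :
    convOp M lam k x - x
      = Pi.single k (lam • sTot M x + (lam - 1) • (x k - sLt M k x)) := by
  classical
  funext j
  by_cases hj : j = k
  · subst hj
    rw [Pi.sub_apply, Pi.single_eq_same, convOp_apply_self, sTot_split M j x]
    set A := sLt M j x
    set B := sGt M j x
    set C := (M j) (x j)
    set D := x j
    module
  · rw [Pi.sub_apply, Pi.single_eq_of_ne hj, convOp_apply_ne M lam hj, sub_self]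

lemma mem_Lsub {x : Fin r → V} :
    x ∈ Lsub M lam ↔ ∀ k, lam • sTot M x + (lam - 1) • (x k - sLt M k x) = 0 := by
  classical
  simp only [Lsub, Submodule.mem_iInf, LinearMap.mem_ker, LinearMap.sub_apply,
    Module.End.one_apply, ← sub_eq_zero (b := x)]
  refine forall_congr' fun k => ?_
  rw [show (convOp M lam k) x - x = _ from convOp_sub M lam k x, ← sub_eq_zero]
  rw [sub_zero]
  exact ⟨fun h => by simpa using congrFun h k, fun h => by simp [h]⟩

lemma single_mem_Ksub {k : Fin r} {u : V} (h : (M k - 1) u = 0) :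
    Pi.single k u ∈ Ksub M k := by
  classical
  rw [Ksub, Submodule.mem_pi]
  intro j _
  by_cases hj : j = k
  · subst hj; simpa [LinearMap.mem_ker] using h
  · simp [if_neg hj, Pi.single_eq_of_ne hj]

lemma convOp_single_comp (j k : Fin r) (u : V) :
    convOp M lam j (Pi.single k u : Fin r → V) j = convCoeff M lam j k u := by
  classical
  rw [convOp, LinearMap.pi_apply, if_pos rfl, LinearMap.sum_apply]
  simp only [LinearMap.comp_apply, LinearMap.proj_apply]
  have hz : ∀ i ∈ Finset.univ, i ≠ k → (convCoeff M lam j i) ((Pi.single k u : Fin r → V) i) = 0 := by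
    intro i _ hik
    rw [Pi.single_eq_of_ne hik, map_zero]
  rw [Finset.sum_eq_single_of_mem k (Finset.mem_univ k) hz, Pi.single_eq_same]

lemma convOp_single_ne {k j : Fin r} (hj : j ≠ k) (u : V) :
    convOp M lam j (Pi.single k u : Fin r → V)
      = (Pi.single k u : Fin r → V)
        + (if k < j then (1 : ℂ) else lam) • (Pi.single j ((M k - 1) u) : Fin r → V) := by
  classical
  funext i
  by_cases hij : i = j
  · subst hij
    rw [convOp_single_comp, Pi.add_apply, Pi.smul_apply, Pi.single_eq_same,
      Pi.single_eq_of_ne hj, zero_add]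
    rcases lt_or_gt_of_ne (Ne.symm hj) with hk | hk
    · rw [convCoeff, if_pos hk, if_pos hk, one_smul]
    · rw [convCoeff, if_neg (not_lt.2 hk.le), if_neg (Ne.symm hj), if_neg (not_lt.2 hk.le),
        LinearMap.smul_apply]
  · rw [convOp_apply_ne M lam hij, Pi.add_apply, Pi.smul_apply, Pi.single_eq_of_ne hij,
      smul_zero, add_zero]

lemma convOp_single_self (k : Fin r) (u : V) :
    convOp M lam k (Pi.single k u : Fin r → V)
      = (Pi.single k (lam • (M k) u) : Fin r → V) := by
  classical
  funext i
  by_cases hik : i = k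
  · subst hik
    rw [convOp_single_comp, Pi.single_eq_same, convCoeff, if_neg (lt_irrefl i), if_pos rfl,
      LinearMap.smul_apply]
  · rw [convOp_apply_ne M lam hik, Pi.single_eq_of_ne hik, Pi.single_eq_of_ne hik]

end Aux

/-- if `M` acts irreducibly on `V` and satisfies (*) and (**), then the
middle convolution `MC_λ(M)` acts irreducibly on `V^r/(K + L)`. -/
theorem middle_convolution_irreducible
    {V : Type*} [AddCommGroup V] [Module ℂ V] [FiniteDimensional ℂ V]
    {r : ℕ} (hr : 1 ≤ r)
    (M : Fin r → Module.End ℂ V) (hM : ∀ i : Fin r, Function.Bijective (M i))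
    (hstar : CondStar M) (hstarstar : CondStarStar M)
    (lam : ℂ) (hlam : lam ≠ 0)
    (h : ∀ k : Fin r, KLsub M lam ≤ (KLsub M lam).comap (convOp M lam k))
    (hirr : ∀ W : Submodule ℂ V, (∀ k : Fin r, W.map (M k) ≤ W) → W = ⊥ ∨ W = ⊤) :
    ∀ U : Submodule ℂ ((Fin r → V) ⧸ KLsub M lam),
      (∀ k : Fin r, U.map (mcOp M lam h k) ≤ U) → U = ⊥ ∨ U = ⊤ := by
  classical
  intro U hU
  set U' : Submodule ℂ (Fin r → V) := U.comap (KLsub M lam).mkQ with hU'def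
  have hmap : Submodule.map (KLsub M lam).mkQ U' = U := by
    rw [hU'def, Submodule.map_comap_eq, Submodule.range_mkQ, top_inf_eq]
  have hNU : ∀ k, ∀ x ∈ U', convOp M lam k x ∈ U' := by
    intro k x hx
    have hQX : (KLsub M lam).mkQ (convOp M lam k x) = mcOp M lam h k ((KLsub M lam).mkQ x) := by
      simp [mcOp, Submodule.mapQ_apply, Submodule.mkQ_apply]
    show (KLsub M lam).mkQ (convOp M lam k x) ∈ U
    rw [hQX]
    exact hU k ⟨_, hx, rfl⟩
  -- the slot subspaces
  set W : Fin r → Submodule ℂ V :=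
    fun k => U'.comap (LinearMap.single ℂ (fun _ : Fin r => V) k) with hWdef
  have hWmem : ∀ k (u : V), u ∈ W k ↔ Pi.single k u ∈ U' := by
    intro k u
    rw [hWdef]
    simp [Submodule.mem_comap]
  -- step 1 : (M k - 1) (W k) ⊆ W j for j ≠ k
  have step1 : ∀ k j : Fin r, j ≠ k → ∀ u ∈ W k, (M k - 1) u ∈ W j := by
    intro k j hjk u hu
    have hx : Pi.single k u ∈ U' := (hWmem k u).1 hu
    have hy := hNU j _ hx
    rw [convOp_single_ne M lam hjk] at hy
    set c : ℂ := if k < j then (1 : ℂ) else lam with hc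
    have hc0 : c ≠ 0 := by
      rw [hc]; split
      · exact one_ne_zero
      · exact hlam
    have hz : c • (Pi.single j ((M k - 1) u) : Fin r → V) ∈ U' := by
      have := U'.sub_mem hy hx
      simpa using this
    have := U'.smul_mem c⁻¹ hz
    rw [smul_smul, inv_mul_cancel₀ hc0, one_smul] at this
    exact (hWmem j _).2 this
  -- step 2 : M k (W k) ⊆ W k
  have step2 : ∀ k : Fin r, ∀ u ∈ W k, (M k) u ∈ W k := by
    intro k u hu
    have hx : Pi.single k u ∈ U' := (hWmem k u).1 hu
    have hy := hNU k _ hx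
    rw [convOp_single_self] at hy
    have hy' : lam • (Pi.single k ((M k) u) : Fin r → V) ∈ U' := by
      rwa [Pi.single_smul] at hy
    have := U'.smul_mem lam⁻¹ hy'
    rw [smul_smul, inv_mul_cancel₀ hlam, one_smul] at this
    exact (hWmem k _).2 this
  -- the invariant subspace W'
  set W' : Submodule ℂ V := ⨆ k, (W k).map (M k - 1) with hW'def
  have hW'le : ∀ j, W' ≤ W j := by
    intro j
    rw [hW'def]
    refine iSup_le fun k => ?_
    rintro _ ⟨u, hu, rfl⟩
    by_cases hjk : j = k
    · subst hjk
      have : (M j - 1) u = (M j) u - u := by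
        simp [LinearMap.sub_apply, Module.End.one_apply]
      rw [this]
      exact (W j).sub_mem (step2 j u hu) hu
    · exact step1 k j hjk u hu
  have hW'inv : ∀ j, W'.map (M j) ≤ W' := by
    intro j
    rintro _ ⟨u, hu, rfl⟩
    have h1 : (M j - 1) u ∈ W' := by
      rw [hW'def]
      exact le_iSup (fun k => (W k).map (M k - 1)) j ⟨u, hW'le j hu, rfl⟩
    have h2 : (M j) u = (M j - 1) u + u := by
      simp [LinearMap.sub_apply, Module.End.one_apply]
    rw [h2]
    exact W'.add_mem h1 hu
  rcases hirr W' hW'inv with hbot | htop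
  · -- W' = ⊥ : show U' ≤ Q, hence U = ⊥
    left
    have hker : ∀ k : Fin r, ∀ u ∈ W k, (M k - 1) u = 0 := by
      intro k u hu
      have : (M k - 1) u ∈ W' := by
        rw [hW'def]
        exact le_iSup (fun k => (W k).map (M k - 1)) k ⟨u, hu, rfl⟩
      rw [hbot] at this
      simpa using this
    -- key vanishing relation
    have hkey : ∀ x ∈ U', ∀ k : Fin r,
        (M k - 1) (lam • sTot M x + (lam - 1) • (x k - sLt M k x)) = 0 := by
      intro x hx k
      have hsub : convOp M lam k x - x ∈ U' := U'.sub_mem (hNU k x hx) hx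
      rw [convOp_sub M lam k x] at hsub
      exact hker k _ ((hWmem k _).2 hsub)
    have hU'le : U' ≤ KLsub M lam := by
      intro x hx
      show x ∈ KLsub M lam
      by_cases hl1 : lam = 1
      · -- λ = 1 : sTot x = 0 by condition (*), and x ∈ L
        subst hl1
        have hs0 : sTot M x = 0 := by
          by_contra hs
          refine hstar ⟨0, hr⟩ ⟨sTot M x, hs, fun j _ => ?_, 1, ?_⟩
          · have := hkey x hx j
            simp only [one_smul, sub_self, zero_smul, add_zero] at this
            rw [LinearMap.sub_apply, Module.End.one_apply, sub_eq_zero] at this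
            exact this
          · have := hkey x hx ⟨0, hr⟩
            simp only [one_smul, sub_self, zero_smul, add_zero] at this
            rw [LinearMap.sub_apply, Module.End.one_apply, sub_eq_zero] at this
            rw [this, one_smul]
        have : x ∈ Lsub M 1 := by
          rw [mem_Lsub]
          intro k
          simp [hs0]
        rw [KLsub]
        exact Submodule.mem_sup_right this
      · -- λ ≠ 1 : split x into a K-part and an L-part
        have hl0 : lam - 1 ≠ 0 := sub_ne_zero.2 hl1
        set c : ℂ := lam / (lam - 1) with hc
        set s : V := sTot M x with hs
        set w : Fin r → V := fun k => c • s + x k - sLt M k x with hw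
        have hwk : ∀ k, (M k - 1) (w k) = 0 := by
          intro k
          have h1 : (lam - 1) • w k = lam • s + (lam - 1) • (x k - sLt M k x) := by
            rw [hw]
            simp only [smul_sub, smul_add, smul_smul]
            rw [hc, mul_div_cancel₀ lam hl0]
            abel
          have h2 := hkey x hx k
          rw [← h1, map_smul, smul_eq_zero] at h2
          exact h2.resolve_left hl0
        have hxw : x - w ∈ Lsub M lam := by
          rw [mem_Lsub]
          intro k
          have hst : sTot M (x - w) = s := by
            rw [sTot, hs, sTot]
            refine Finset.sum_congr rfl fun j _ => ?_
            rw [Pi.sub_apply, map_sub, hwk j, sub_zero]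
          have hsl : sLt M k (x - w) = sLt M k x := by
            rw [sLt, sLt]
            refine Finset.sum_congr rfl fun j _ => ?_
            rw [Pi.sub_apply, map_sub, hwk j, sub_zero]
          have hxk : (x - w) k = sLt M k x - c • s := by
            show x k - (c • s + x k - sLt M k x) = sLt M k x - c • s
            abel
          rw [hst, hsl, hxk]
          have : (lam - 1) • (sLt M k x - c • s - sLt M k x) = -(lam • s) := by
            rw [sub_sub_cancel_left, smul_neg, smul_smul, hc, mul_div_cancel₀ lam hl0]
          rw [this, add_neg_cancel]
        have hxK : (∑ k, Pi.single k (w k)) ∈ ⨆ k : Fin r, Ksub M k := by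
          refine Submodule.sum_mem _ fun k _ => ?_
          exact le_iSup (fun k => Ksub M k) k (single_mem_Ksub M (hwk k))
        have hxsplit : x = (∑ k, Pi.single k (w k)) + (x - w) := by
          rw [Finset.univ_sum_single]
          abel
        rw [KLsub, hxsplit]
        exact Submodule.add_mem _ (Submodule.mem_sup_left hxK) (Submodule.mem_sup_right hxw)
    rw [← hmap, eq_bot_iff]
    rintro _ ⟨x, hx, rfl⟩
    rw [Submodule.mem_bot, Submodule.mkQ_apply, Submodule.Quotient.mk_eq_zero]
    exact hU'le hx
  · -- W' = ⊤ : U' = ⊤, hence U = ⊤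
    right
    have hWtop : ∀ j, W j = ⊤ := fun j => top_unique (htop ▸ hW'le j)
    have hU'top : U' = ⊤ := by
      rw [eq_top_iff]
      intro x _
      have : x = ∑ k, Pi.single k (x k) := (Finset.univ_sum_single x).symm
      rw [this]
      refine Submodule.sum_mem _ fun k _ => ?_
      exact (hWmem k (x k)).1 (by rw [hWtop k]; trivial)
    rw [← hmap, hU'top, Submodule.map_top, Submodule.range_mkQ]
end

section
/- Suppose M satisfies conditions (*) and (**), λ ≠ 0, and let MC_λ(M) = (Ñ_r,…,Ñ_1). Let k ∈ {1,…,r} and α ∈ ℂ with α ∉ {0, 1, λ^{−1}}. Then for every integer l ≥ 0, dim ker((Ñ_k − λα·id)^l) = dim ker((M_k − α·id)^l). (Equivalently, every Jordan block J(α, l) of M_k contributes a Jordan block J(λα, l) of the same length to Ñ_k, and these are the only Jordan blocks of Ñ_k with eigenvalue λα.) -/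
open Module LinearMap Submodule

section Aux

variable {V : Type*} [AddCommGroup V] [Module ℂ V] {r : ℕ}

lemma convOp_apply (M : Fin r → Module.End ℂ V) (lam : ℂ) (k : Fin r)
    (x : Fin r → V) (j : Fin r) :
    convOp M lam k x j =
      if j = k then ∑ i : Fin r, convCoeff M lam k i (x i) else x j := by
  simp only [convOp, LinearMap.pi_apply]
  split_ifs with hj
  · simp [LinearMap.sum_apply]
  · simp

lemma pow_apply_of_apply_eq_smul {W : Type*} [AddCommGroup W] [Module ℂ W]
    (f : Module.End ℂ W) (c : ℂ) (x : W) (hx : f x = c • x) :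
    ∀ l : ℕ, (f ^ l) x = c ^ l • x := by
  intro l
  induction l with
  | zero => simp
  | succ n ih =>
    rw [pow_succ, Module.End.mul_apply, hx, map_smul, ih, smul_smul, ← pow_succ']

lemma le_comap_sub_smul {W : Type*} [AddCommGroup W] [Module ℂ W]
    (f : Module.End ℂ W) (p : Submodule ℂ W) (μ : ℂ) (hp : p ≤ p.comap f) :
    p ≤ p.comap (f - μ • 1) := by
  intro x hx
  simp only [Submodule.mem_comap, LinearMap.sub_apply, LinearMap.smul_apply,
    Module.End.one_apply]
  exact p.sub_mem (hp hx) (p.smul_mem _ hx)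

lemma le_comap_pow {W : Type*} [AddCommGroup W] [Module ℂ W]
    (f : Module.End ℂ W) (p : Submodule ℂ W) (hp : p ≤ p.comap f) (l : ℕ) :
    p ≤ p.comap (f ^ l) := by
  induction l with
  | zero => intro x hx; simpa using hx
  | succ n ih =>
    intro x hx
    have h1 : f x ∈ p := hp hx
    have h2 : (f ^ n) (f x) ∈ p := ih h1
    simpa [pow_succ, Module.End.mul_apply] using h2

end Aux
section Aux2

variable {V : Type*} [AddCommGroup V] [Module ℂ V] {r : ℕ}

lemma Ksub_le_ker_one (M : Fin r → Module.End ℂ V) (lam : ℂ) (k j : Fin r)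
    (hj : j ≠ k) : Ksub M j ≤ LinearMap.ker (convOp M lam k - 1) := by
  intro x hx
  rw [Ksub, Submodule.mem_pi] at hx
  have hx0 : ∀ i : Fin r, i ≠ j → x i = 0 := by
    intro i hi
    have := hx i (Set.mem_univ i)
    rwa [if_neg hi, Submodule.mem_bot] at this
  have hxj : (M j - 1) (x j) = 0 := by
    have := hx j (Set.mem_univ j)
    rwa [if_pos rfl, LinearMap.mem_ker] at this
  rw [LinearMap.mem_ker, LinearMap.sub_apply, Module.End.one_apply, sub_eq_zero]
  funext i
  rw [convOp_apply]
  split_ifs with hik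
  · subst hik
    rw [Finset.sum_eq_single_of_mem j (Finset.mem_univ j)
      (fun b _ hb => by rw [hx0 b hb, map_zero])]
    rw [hx0 i (fun hik => hj hik.symm)]
    rw [convCoeff]
    split_ifs with h1
    · exact hxj
    · rw [LinearMap.smul_apply, hxj, smul_zero]
  · rfl

lemma Ksub_le_ker_lam (M : Fin r → Module.End ℂ V) (lam : ℂ) (k : Fin r) :
    Ksub M k ≤ LinearMap.ker (convOp M lam k - lam • 1) := by
  intro x hx
  rw [Ksub, Submodule.mem_pi] at hx
  have hx0 : ∀ i : Fin r, i ≠ k → x i = 0 := by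
    intro i hi
    have := hx i (Set.mem_univ i)
    rwa [if_neg hi, Submodule.mem_bot] at this
  have hxk : M k (x k) = x k := by
    have := hx k (Set.mem_univ k)
    rw [if_pos rfl, LinearMap.mem_ker, LinearMap.sub_apply, Module.End.one_apply,
      sub_eq_zero] at this
    exact this
  rw [LinearMap.mem_ker, LinearMap.sub_apply, LinearMap.smul_apply,
    Module.End.one_apply, sub_eq_zero]
  funext i
  rw [convOp_apply, Pi.smul_apply]
  split_ifs with hik
  · subst hik
    rw [Finset.sum_eq_single_of_mem i (Finset.mem_univ i)
      (fun b _ hb => by rw [hx0 b hb, map_zero])]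
    rw [convCoeff, if_neg (lt_irrefl i), if_pos rfl, LinearMap.smul_apply, hxk]
  · rw [hx0 i hik, smul_zero]

lemma KLsub_le_sup (M : Fin r → Module.End ℂ V) (lam : ℂ) (k : Fin r) :
    KLsub M lam ≤
      LinearMap.ker (convOp M lam k - 1) ⊔ LinearMap.ker (convOp M lam k - lam • 1) := by
  rw [KLsub]
  apply sup_le
  · apply iSup_le
    intro j
    by_cases hj : j = k
    · subst hj; exact le_sup_of_le_right (Ksub_le_ker_lam M lam j)
    · exact le_sup_of_le_left (Ksub_le_ker_one M lam k j hj)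
  · exact le_sup_of_le_left (iInf_le _ k)

lemma convOp_single (M : Fin r → Module.End ℂ V) (lam : ℂ) (k : Fin r) (v : V) :
    convOp M lam k (Pi.single k v) = Pi.single k ((lam • M k) v) := by
  funext j
  rw [convOp_apply]
  split_ifs with hj
  · subst hj
    rw [Pi.single_eq_same,
      Finset.sum_eq_single_of_mem j (Finset.mem_univ j)
        (fun b _ hb => by rw [Pi.single_eq_of_ne hb, map_zero]),
      Pi.single_eq_same, convCoeff, if_neg (lt_irrefl j), if_pos rfl]
  · rw [Pi.single_eq_of_ne hj, Pi.single_eq_of_ne hj]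

lemma convOp_sub_pow_single (M : Fin r → Module.End ℂ V) (lam : ℂ) (k : Fin r)
    (μ : ℂ) (l : ℕ) (v : V) :
    ((convOp M lam k - μ • 1) ^ l) (Pi.single k v) =
      Pi.single k (((lam • M k - μ • 1) ^ l) v) := by
  induction l generalizing v with
  | zero => simp
  | succ n ih =>
    have h1 : (convOp M lam k - μ • 1) (Pi.single k v)
        = Pi.single k ((lam • M k - μ • 1) v) := by
      simp only [LinearMap.sub_apply, convOp_single, LinearMap.smul_apply,
        Module.End.one_apply]
      funext j
      by_cases hj : j = k
      · subst hj; simp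
      · simp [Pi.single_eq_of_ne hj]
    rw [pow_succ, Module.End.mul_apply, h1, ih, pow_succ, Module.End.mul_apply]

lemma convOp_sub_pow_apply_ne (M : Fin r → Module.End ℂ V) (lam : ℂ) (k : Fin r)
    (μ : ℂ) (l : ℕ) (x : Fin r → V) (j : Fin r) (hj : j ≠ k) :
    (((convOp M lam k - μ • 1) ^ l) x) j = (1 - μ) ^ l • x j := by
  induction l generalizing x with
  | zero => simp
  | succ n ih =>
    rw [pow_succ, Module.End.mul_apply, ih]
    have h1 : ((convOp M lam k - μ • 1) x) j = (1 - μ) • x j := by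
      rw [LinearMap.sub_apply, LinearMap.smul_apply, Module.End.one_apply,
        Pi.sub_apply, Pi.smul_apply, convOp_apply, if_neg hj, sub_smul, one_smul]
    rw [h1, smul_smul, ← pow_succ]

lemma ker_convOp_sub_pow (M : Fin r → Module.End ℂ V) (lam : ℂ) (k : Fin r)
    (μ : ℂ) (l : ℕ) (hμ : μ ≠ 1) :
    LinearMap.ker ((convOp M lam k - μ • 1) ^ l) =
      Submodule.map (LinearMap.single ℂ (fun _ : Fin r => V) k)
        (LinearMap.ker ((lam • M k - μ • 1) ^ l)) := by
  have hc : (1 - μ) ^ l ≠ 0 := pow_ne_zero _ (sub_ne_zero.mpr (Ne.symm hμ))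
  ext x
  simp only [LinearMap.mem_ker, Submodule.mem_map]
  constructor
  · intro hx
    have hzero : ∀ j : Fin r, j ≠ k → x j = 0 := by
      intro j hj
      have h1 := convOp_sub_pow_apply_ne M lam k μ l x j hj
      rw [hx] at h1
      have : (1 - μ) ^ l • x j = 0 := h1.symm
      exact (smul_eq_zero.mp this).resolve_left hc
    have hx' : x = Pi.single k (x k) := by
      funext j
      by_cases hj : j = k
      · subst hj; rw [Pi.single_eq_same]
      · rw [Pi.single_eq_of_ne hj, hzero j hj]
    refine ⟨x k, ?_, ?_⟩
    · have h2 := convOp_sub_pow_single M lam k μ l (x k)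
      rw [← hx', hx] at h2
      have h3 := congrFun h2.symm k
      rwa [Pi.single_eq_same] at h3
    · show Pi.single k (x k) = x
      exact hx'.symm
  · rintro ⟨v, hv, rfl⟩
    show ((convOp M lam k - μ • 1) ^ l) (Pi.single k v) = 0
    rw [convOp_sub_pow_single, hv, Pi.single_zero]

lemma single_injective' :
    Function.Injective (LinearMap.single ℂ (fun _ : Fin r => V) k) := by
  intro a b hab
  have := congrFun hab k
  simpa [Pi.single_eq_same] using this

end Aux2

/-- for `α ∉ {0, 1, λ⁻¹}`, the generalized eigenspace structure of `Ñ_k`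
at `λα` agrees with that of `M_k` at `α`:
`dim ker((Ñ_k − λα)^l) = dim ker((M_k − α)^l)` for all `l ≥ 0`. -/
theorem middle_convolution_jordan_generic_eigenvalue
    {V : Type*} [AddCommGroup V] [Module ℂ V] [FiniteDimensional ℂ V]
    {r : ℕ} (hr : 1 ≤ r)
    (M : Fin r → Module.End ℂ V) (hM : ∀ i : Fin r, Function.Bijective (M i))
    (hstar : CondStar M) (hstarstar : CondStarStar M)
    (lam : ℂ) (hlam : lam ≠ 0)
    (h : ∀ k : Fin r, KLsub M lam ≤ (KLsub M lam).comap (convOp M lam k))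
    (k : Fin r) (α : ℂ) (hα0 : α ≠ 0) (hα1 : α ≠ 1) (hαlam : α ≠ lam⁻¹) :
    ∀ l : ℕ,
      Module.finrank ℂ (LinearMap.ker ((mcOp M lam h k - (lam * α) • 1) ^ l)) =
        Module.finrank ℂ (LinearMap.ker ((M k - α • 1) ^ l)) := by
  intro l
  set μ : ℂ := lam * α with hμdef
  have hμ1 : μ ≠ 1 := by
    intro hc
    exact hαlam (eq_inv_of_mul_eq_one_left (by rw [mul_comm]; exact hc))
  have hμlam : μ ≠ lam := by
    intro hc
    exact hα1 (mul_left_cancel₀ hlam (by rw [mul_one, ← hμdef, hc]))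
  set N : Module.End ℂ (Fin r → V) := convOp M lam k with hNdef
  set U : Submodule ℂ (Fin r → V) := KLsub M lam with hUdef
  set g : Module.End ℂ (Fin r → V) := (N - μ • 1) ^ l with hgdef
  -- U is invariant under g
  have hinv : ∀ x ∈ U, g x ∈ U :=
    fun x hx => le_comap_pow (N - μ • 1) U (le_comap_sub_smul N U μ (h k)) l hx
  -- injectivity of g on U
  have hinjU : ∀ x ∈ U, g x = 0 → x = 0 := by
    intro x hxU hx0
    have hxAB := KLsub_le_sup M lam k hxU
    rw [Submodule.mem_sup] at hxAB
    obtain ⟨a, ha, b, hb, rfl⟩ := hxAB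
    have haN : N a = a := by
      have h1 := LinearMap.mem_ker.mp ha
      rwa [LinearMap.sub_apply, Module.End.one_apply, sub_eq_zero] at h1
    have hbN : N b = lam • b := by
      have h1 := LinearMap.mem_ker.mp hb
      rwa [LinearMap.sub_apply, LinearMap.smul_apply, Module.End.one_apply,
        sub_eq_zero] at h1
    have ha' : g a = (1 - μ) ^ l • a := by
      refine pow_apply_of_apply_eq_smul _ _ _ ?_ l
      rw [LinearMap.sub_apply, LinearMap.smul_apply, Module.End.one_apply, haN,
        sub_smul, one_smul]
    have hb' : g b = (lam - μ) ^ l • b := by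
      refine pow_apply_of_apply_eq_smul _ _ _ ?_ l
      rw [LinearMap.sub_apply, LinearMap.smul_apply, Module.End.one_apply, hbN,
        sub_smul]
    rw [map_add, ha', hb'] at hx0
    have c1 : (1 - μ) ^ l ≠ 0 := pow_ne_zero _ (sub_ne_zero.mpr (Ne.symm hμ1))
    have c2 : (lam - μ) ^ l ≠ 0 := pow_ne_zero _ (sub_ne_zero.mpr (Ne.symm hμlam))
    by_cases hl1 : lam = 1
    · subst hl1
      rw [← smul_add] at hx0
      exact (smul_eq_zero.mp hx0).resolve_left c1
    · have hbeq : b = (-(((lam - μ) ^ l)⁻¹ * (1 - μ) ^ l)) • a := by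
        have h1 : (lam - μ) ^ l • b = -((1 - μ) ^ l • a) :=
          eq_neg_of_add_eq_zero_right hx0
        calc b = ((lam - μ) ^ l)⁻¹ • ((lam - μ) ^ l • b) := by
              rw [smul_smul, inv_mul_cancel₀ c2, one_smul]
          _ = (-(((lam - μ) ^ l)⁻¹ * (1 - μ) ^ l)) • a := by
              rw [h1, smul_neg, smul_smul, neg_smul]
      have hbA : b ∈ LinearMap.ker (N - 1) := by
        rw [hbeq]
        exact Submodule.smul_mem _ _ ha
      have hbN1 : N b = b := by
        have h1 := LinearMap.mem_ker.mp hbA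
        rwa [LinearMap.sub_apply, Module.End.one_apply, sub_eq_zero] at h1
      have hb0 : b = 0 := by
        have h1 : (lam - 1) • b = 0 := by
          rw [sub_smul, one_smul, ← hbN, hbN1, sub_self]
        exact (smul_eq_zero.mp h1).resolve_left (sub_ne_zero.mpr hl1)
      rw [hb0, smul_zero, add_zero] at hx0
      have ha0 : a = 0 := (smul_eq_zero.mp hx0).resolve_left c1
      rw [ha0, hb0, add_zero]
  -- g restricted to U is bijective
  have hg'surj : Function.Surjective (g.restrict hinv) := by
    rw [← LinearMap.injective_iff_surjective]
    rw [← LinearMap.ker_eq_bot, LinearMap.ker_eq_bot']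
    rintro ⟨x, hx⟩ hx0
    have h1 : g x = 0 := by
      have := congrArg Subtype.val hx0
      rwa [LinearMap.restrict_apply] at this
    exact Subtype.ext (hinjU x hx h1)
  -- the quotient operator
  have hbar : ∀ (m : ℕ) (x : Fin r → V),
      ((mcOp M lam h k - μ • 1) ^ m) (U.mkQ x) = U.mkQ (((N - μ • 1) ^ m) x) := by
    intro m
    induction m with
    | zero => intro x; simp
    | succ n ih =>
      intro x
      have hmc : ∀ y : Fin r → V,
          mcOp M lam h k (U.mkQ y) = U.mkQ (convOp M lam k y) := fun y =>
        Submodule.mapQ_apply _ _ _ _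
      have h1 : (mcOp M lam h k - μ • 1) (U.mkQ x) = U.mkQ ((N - μ • 1) x) := by
        have hrhs : U.mkQ ((N - μ • 1) x) = U.mkQ (N x) - μ • U.mkQ x := by
          rw [LinearMap.sub_apply, LinearMap.smul_apply, Module.End.one_apply,
            map_sub, map_smul]
        rw [hrhs, LinearMap.sub_apply, LinearMap.smul_apply, Module.End.one_apply,
          hmc x]
      rw [pow_succ, Module.End.mul_apply, h1, ih, pow_succ, Module.End.mul_apply]
  -- kernel of the quotient operator
  have hker : LinearMap.ker ((mcOp M lam h k - μ • 1) ^ l) =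
      Submodule.map U.mkQ (LinearMap.ker g) := by
    ext y
    constructor
    · intro hy
      obtain ⟨x, rfl⟩ := U.mkQ_surjective y
      rw [LinearMap.mem_ker, hbar l x] at hy
      have hgxU : g x ∈ U := by
        rwa [Submodule.mkQ_apply, Submodule.Quotient.mk_eq_zero] at hy
      obtain ⟨⟨u, hu⟩, huu⟩ := hg'surj ⟨g x, hgxU⟩
      have hgu : g u = g x := by
        have := congrArg Subtype.val huu
        rwa [LinearMap.restrict_apply] at this
      refine ⟨x - u, ?_, ?_⟩
      · show x - u ∈ LinearMap.ker g
        rw [LinearMap.mem_ker, map_sub, hgu, sub_self]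
      · rw [map_sub]
        have : U.mkQ u = 0 := by
          rw [Submodule.mkQ_apply, Submodule.Quotient.mk_eq_zero]; exact hu
        rw [this, sub_zero]
    · rintro ⟨x, hx, rfl⟩
      rw [LinearMap.mem_ker, hbar l x, LinearMap.mem_ker.mp hx, map_zero]
  -- dimension count via mkQ restricted to ker g
  have e1 : Module.finrank ℂ (LinearMap.ker ((mcOp M lam h k - μ • 1) ^ l)) =
      Module.finrank ℂ (LinearMap.ker g) := by
    set φ : LinearMap.ker g →ₗ[ℂ] (Fin r → V) ⧸ U :=
      U.mkQ ∘ₗ (LinearMap.ker g).subtype with hφdef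
    have hφker : LinearMap.ker φ = ⊥ := by
      rw [eq_bot_iff]
      rintro ⟨x, hx⟩ hxk
      have h1 : U.mkQ x = 0 := hxk
      rw [Submodule.mkQ_apply, Submodule.Quotient.mk_eq_zero] at h1
      exact Submodule.mem_bot _ |>.mpr (Subtype.ext (hinjU x h1 (LinearMap.mem_ker.mp hx)))
    have hφrange : LinearMap.range φ = Submodule.map U.mkQ (LinearMap.ker g) := by
      rw [hφdef, LinearMap.range_comp, Submodule.range_subtype]
    have h2 := LinearMap.finrank_range_add_finrank_ker φ
    rw [hφker, finrank_bot, add_zero, hφrange, ← hker] at h2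
    exact h2
  -- identify ker g with the kernel on V
  have h2 : LinearMap.ker ((lam • M k - μ • 1) ^ l) =
      LinearMap.ker ((M k - α • 1) ^ l) := by
    have h3 : lam • M k - μ • 1 = lam • (M k - α • (1 : Module.End ℂ V)) := by
      rw [smul_sub, smul_smul, hμdef]
    rw [h3, smul_pow, LinearMap.ker_smul _ _ (pow_ne_zero l hlam)]
  have e2 : Module.finrank ℂ (LinearMap.ker g) =
      Module.finrank ℂ (LinearMap.ker ((M k - α • 1) ^ l)) := by
    rw [hgdef, ker_convOp_sub_pow M lam k μ l hμ1, h2]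
    exact (LinearEquiv.finrank_eq
      (Submodule.equivMapOfInjective _ single_injective' _)).symm
  exact e1.trans e2
end

section
/- Suppose M satisfies conditions (*) and (**), λ ≠ 0 and λ ≠ 1, and let MC_λ(M) = (Ñ_r,…,Ñ_1). Then for every k ∈ {1,…,r} and every integer l ≥ 2, dim ker((Ñ_k − id)^l) − dim ker((Ñ_k − id)^{l−1}) = dim ker((M_k − λ^{−1}·id)^{l−1}) − dim ker((M_k − λ^{−1}·id)^{l−2}). (Equivalently, every Jordan block J(λ^{−1}, l) of M_k contributes a Jordan block J(1, l+1) to Ñ_k, and all other Jordan blocks of Ñ_k with eigenvalue 1 have length 1.) -/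
open Module LinearMap Submodule

/-!
Write `ι_k : V → V^r` for the inclusion in the `k`-th slot and `A_k : V^r → V` for the `k`-th row
of `N_k - 1`, so that `N_k - 1 = ι_k ∘ A_k` and `A_k ∘ ι_k = λ M_k - 1`; hence
`(N_k - 1)^(m+1) = ι_k (λ M_k - 1)^m A_k`. The kernel of `(Ñ_k - 1)^(m+1)` is the image in
`V^r/(K + L)` of the preimage of `K + L` under this map. Condition (*) with `λ ≠ 0, 1` gives
`ι_k⁻¹(K + L) = ker (M_k - 1)`, condition (**) makes `A_k` surjective, and `ker (M_k - 1)` lies in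
the image of every power of `λ M_k - 1` since `λ ≠ 1`. Counting dimensions,
`dim ker (Ñ_k - 1)^(m+1) = dim ker (M_k - λ⁻¹)^m + c` with `c` independent of `m`.
-/

theorem LinearMap.comp_pow_succ {R X Y : Type*} [Semiring R] [AddCommMonoid X] [Module R X]
    [AddCommMonoid Y] [Module R Y] (f : X →ₗ[R] Y) (g : Y →ₗ[R] X) (m : ℕ) :
    (g ∘ₗ f) ^ (m + 1) = g ∘ₗ ((f ∘ₗ g) ^ m) ∘ₗ f := by
  induction m with
  | zero => rfl
  | succ m ih =>
    rw [pow_succ, ih, pow_succ, Module.End.mul_eq_comp, Module.End.mul_eq_comp]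
    simp only [LinearMap.comp_assoc]

section LinearAlgebra

variable {K X Y : Type*} [Field K] [AddCommGroup X] [Module K X] [AddCommGroup Y] [Module K Y]

theorem Module.End.ker_sub_smul_le_range_pow (g : Module.End K X) {μ : K} (hμ : μ ≠ 0) (m : ℕ) :
    ker (g - μ • 1) ≤ range (g ^ m) := by
  intro u hu
  have hgu : g u = μ • u := by simpa [sub_eq_zero] using hu
  have hpow : (g ^ m) u = μ ^ m • u := by
    induction m with
    | zero => simp
    | succ m ih => rw [pow_succ', Module.End.mul_apply, ih, map_smul, hgu, smul_smul, pow_succ]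
  refine ⟨(μ ^ m)⁻¹ • u, ?_⟩
  rw [map_smul, hpow, smul_smul, inv_mul_cancel₀ (pow_ne_zero m hμ), one_smul]

/-- On `ker (f - 1)` the map `lam • f - 1` is multiplication by `lam - 1`. -/
theorem Module.End.ker_sub_one_le_range_smul_sub_one_pow (f : Module.End K X) {lam : K}
    (hlam : lam ≠ 1) (m : ℕ) : ker (f - 1) ≤ range ((lam • f - 1) ^ m) := by
  refine le_trans ?_ ((lam • f - 1).ker_sub_smul_le_range_pow (sub_ne_zero.mpr hlam) m)
  intro u hu
  have hfu : f u = u := by simpa [sub_eq_zero] using hu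
  simp [hfu, sub_smul]

theorem Module.End.ker_smul_sub_one_pow (f : Module.End K X) {lam : K} (hlam : lam ≠ 0) (m : ℕ) :
    ker ((lam • f - 1) ^ m) = ker ((f - lam⁻¹ • 1) ^ m) := by
  have : lam • f - 1 = lam • (f - lam⁻¹ • 1) := by
    rw [smul_sub, smul_smul, mul_inv_cancel₀ hlam, one_smul]
  rw [this, smul_pow, ker_smul _ _ (pow_ne_zero m hlam)]

variable [FiniteDimensional K X]

theorem Submodule.finrank_map_add_finrank_ker_of_ker_le {f : X →ₗ[K] Y} {Q : Submodule K X}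
    (h : ker f ≤ Q) : finrank K (Q.map f) + finrank K (ker f) = finrank K Q := by
  have := (f.domRestrict Q).finrank_range_add_finrank_ker
  rwa [range_domRestrict, ker_domRestrict, (comapSubtypeEquivOfLe h).finrank_eq] at this

theorem Submodule.finrank_comap_of_le_range {f : X →ₗ[K] Y} {S : Submodule K Y}
    (h : S ≤ range f) : finrank K (S.comap f) = finrank K (ker f) + finrank K S := by
  have := finrank_map_add_finrank_ker_of_ker_le (ker_le_comap (p := S) f)
  rw [map_comap_eq_of_le h] at this
  omega

theorem Submodule.finrank_ker_mapQ_add_finrank (p : Submodule K X) (g : Module.End K X)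
    (h : p ≤ p.comap g) : finrank K (ker (p.mapQ p g h)) + finrank K p = finrank K (p.comap g) := by
  have := finrank_map_add_finrank_ker_of_ker_le (f := p.mkQ) (Q := p.comap g) (by rwa [ker_mkQ])
  rwa [ker_mkQ, ← ker_mapQ p p g h] at this

end LinearAlgebra

section Convolution

variable {V : Type*} [AddCommGroup V] [Module ℂ V] {r : ℕ} (M : Fin r → Module.End ℂ V) (lam : ℂ)

noncomputable def convRow (k : Fin r) : (Fin r → V) →ₗ[ℂ] V :=
  (∑ i, convCoeff M lam k i ∘ₗ LinearMap.proj i) - LinearMap.proj k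

theorem convOp_sub_one (k : Fin r) :
    convOp M lam k - 1 = LinearMap.single ℂ (fun _ ↦ V) k ∘ₗ convRow M lam k := by
  refine LinearMap.ext fun x ↦ funext fun j ↦ ?_
  by_cases hj : j = k
  · subst hj
    simp [convOp, convRow]
  · simp [convOp, convRow, hj]

theorem convRow_single (k i : Fin r) (v : V) :
    convRow M lam k (Pi.single i v) = convCoeff M lam k i v - (Pi.single i v : Fin r → V) k := by
  simp only [convRow, LinearMap.sub_apply, LinearMap.sum_apply, comp_apply, proj_apply]
  rw [Finset.sum_eq_single i (fun j _ hj ↦ by simp [hj]) (by simp), Pi.single_eq_same]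

theorem convRow_comp_single (k : Fin r) :
    convRow M lam k ∘ₗ LinearMap.single ℂ (fun _ ↦ V) k = lam • M k - 1 := by
  ext v
  simp [convRow_single, convCoeff]

theorem convOp_sub_one_pow_succ (k : Fin r) (m : ℕ) :
    (convOp M lam k - 1) ^ (m + 1) =
      LinearMap.single ℂ (fun _ ↦ V) k ∘ₗ ((lam • M k - 1) ^ m) ∘ₗ convRow M lam k := by
  rw [convOp_sub_one, comp_pow_succ, convRow_comp_single]

theorem convCoeff_apply_of_fixed {j i : Fin r} {v : V} (hv : M i v = v) :
    convCoeff M lam j i v = if i = j then lam • v else 0 := by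
  have hv' : (M i - 1) v = 0 := by simp [hv]
  unfold convCoeff
  split_ifs <;> simp_all

theorem convRow_of_forall_fixed {x : Fin r → V} (hx : ∀ i, M i (x i) = x i) (j : Fin r) :
    convRow M lam j x = (lam - 1) • x j := by
  simp [convRow, convCoeff_apply_of_fixed M lam (hx _), sub_smul]

theorem Ksub_eq_map_single (k : Fin r) :
    Ksub M k = (ker (M k - 1)).map (LinearMap.single ℂ (fun _ ↦ V) k) := by
  ext x
  simp only [Ksub, mem_pi, Set.mem_univ, true_implies, mem_map, coe_single]
  constructor
  · intro hx
    refine ⟨x k, by simpa using hx k, funext fun j ↦ ?_⟩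
    by_cases hj : j = k
    · subst hj; simp
    · simpa [hj, eq_comm] using hx j
  · rintro ⟨u, hu, rfl⟩ j
    by_cases hj : j = k
    · subst hj; simpa using hu
    · simp [hj]

theorem iSup_Ksub : ⨆ k, Ksub M k = Submodule.pi Set.univ fun k ↦ ker (M k - 1) := by
  simp_rw [Ksub_eq_map_single]
  exact iSup_map_single

theorem Lsub_eq_iInf_ker_convRow : Lsub M lam = ⨅ k, ker (convRow M lam k) := by
  simp_rw [Lsub, convOp_sub_one, ker_comp_of_ker_eq_bot _ (ker_single ℂ _ _)]

variable {M lam}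

theorem exists_convCoeff_apply_eq_smul (hlam0 : lam ≠ 0) (hlam1 : lam ≠ 1) {j k : Fin r}
    (hjk : j ≠ k) {v : V} (hv : M k v = lam⁻¹ • v) :
    ∃ c : ℂ, c ≠ 0 ∧ convCoeff M lam j k v = c • v := by
  have hinv : lam⁻¹ - 1 ≠ 0 := sub_ne_zero.mpr (inv_ne_one.mpr hlam1)
  unfold convCoeff
  split_ifs with hkj hkj'
  · exact ⟨lam⁻¹ - 1, hinv, by simp [hv, sub_smul]⟩
  · exact absurd hkj'.symm hjk
  · refine ⟨1 - lam, sub_ne_zero.mpr hlam1.symm, ?_⟩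
    simp [hv, smul_sub, smul_smul, hlam0, sub_smul]

/-- The rows of `x ∈ L` force `x k` to be an eigenvector of `M k` (eigenvalue `λ⁻¹`) fixed by
every other `M j`, which (*) rules out. -/
theorem apply_eq_zero_of_mem_Lsub (hstar : CondStar M) (hlam0 : lam ≠ 0) (hlam1 : lam ≠ 1)
    {k : Fin r} {x : Fin r → V} (hx : x ∈ Lsub M lam) (hfix : ∀ i, i ≠ k → M i (x i) = x i) :
    x k = 0 := by
  set v := x k
  set y := Function.update x k 0
  have hy : ∀ i, M i (y i) = y i := fun i ↦ by
    by_cases hi : i = k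
    · subst hi; simp [y]
    · simpa [y, hi] using hfix i hi
  have hxy : x = Pi.single k v + y := funext fun i ↦ by
    by_cases hi : i = k
    · subst hi; simp [y, v]
    · simp [y, hi]
  have hrow : ∀ j,
      convCoeff M lam j k v - (Pi.single k v : Fin r → V) j + (lam - 1) • y j = 0 := by
    intro j
    rw [Lsub_eq_iInf_ker_convRow, mem_iInf] at hx
    have := mem_ker.mp (hx j)
    rwa [hxy, map_add, convRow_single, convRow_of_forall_fixed M lam hy] at this
  have hMk : M k v = lam⁻¹ • v := by
    have := hrow k
    simp only [convCoeff, lt_irrefl, if_false, if_true, Pi.single_eq_same, y,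
      Function.update_self, smul_zero, add_zero, sub_eq_zero, LinearMap.smul_apply] at this
    simpa [smul_smul, hlam0] using congrArg (lam⁻¹ • ·) this
  have hMj : ∀ j, j ≠ k → M j v = v := by
    intro j hjk
    obtain ⟨c, hc, hcv⟩ := exists_convCoeff_apply_eq_smul hlam0 hlam1 hjk hMk
    have hrowj := hrow j
    have hyj : y j = x j := Function.update_of_ne hjk _ _
    rw [Pi.single_eq_of_ne hjk, sub_zero, hcv, hyj] at hrowj
    have hxj : x j ∈ ker (M j - 1) := by simp [hfix j hjk]
    have hcv_mem : c • v ∈ ker (M j - 1) := by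
      rw [eq_neg_of_add_eq_zero_left hrowj]
      exact neg_mem (smul_mem _ _ hxj)
    simpa [sub_eq_zero] using (smul_mem_iff _ hc).mp hcv_mem
  by_contra hv
  exact hstar k ⟨v, hv, hMj, lam⁻¹, hMk⟩

theorem comap_single_KLsub (hstar : CondStar M) (hlam0 : lam ≠ 0) (hlam1 : lam ≠ 1)
    (k : Fin r) : (KLsub M lam).comap (LinearMap.single ℂ (fun _ ↦ V) k) = ker (M k - 1) := by
  apply le_antisymm
  · intro u hu
    obtain ⟨κ, hκ, ℓ, hℓ, hsum⟩ := mem_sup.mp hu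
    rw [iSup_Ksub] at hκ
    have hκfix : ∀ i, M i (κ i) = κ i := fun i ↦ by simpa [sub_eq_zero] using hκ i trivial
    have hℓ_eq : ∀ i, i ≠ k → ℓ i = -κ i := fun i hi ↦ by
      simpa [hi, eq_neg_iff_add_eq_zero, add_comm] using congrFun hsum i
    have hℓk := apply_eq_zero_of_mem_Lsub hstar hlam0 hlam1 hℓ fun i hi ↦ by
      rw [hℓ_eq i hi, map_neg, hκfix]
    have hu : u = κ k := by simpa [hℓk] using (congrFun hsum k).symm
    simp [hu, hκfix]
  · intro u hu
    refine mem_sup_left (mem_iSup_of_mem k ?_)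
    rw [Ksub_eq_map_single]
    exact mem_map_of_mem hu

theorem invariant_of_range_convRow_le (hlam0 : lam ≠ 0) {k : Fin r} {W : Submodule ℂ V}
    (hW : range (convRow M lam k) ≤ W) :
    (∀ j, W.map (M j) ≤ W) ∧ ∀ j, j ≠ k → range (M j - 1) ≤ W := by
  have hmem : ∀ i v, convCoeff M lam k i v - (Pi.single i v : Fin r → V) k ∈ W :=
    fun i v ↦ convRow_single M lam k i v ▸ hW (mem_range_self _ _)
  have hoff : ∀ j, j ≠ k → range (M j - 1) ≤ W := by
    rintro j hjk _ ⟨v, rfl⟩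
    have := hmem j v
    rw [Pi.single_eq_of_ne' hjk, sub_zero, convCoeff] at this
    split_ifs at this with hjk'
    · exact this
    · exact (smul_mem_iff _ hlam0).mp this
  refine ⟨fun j ↦ ?_, hoff⟩
  rintro _ ⟨w, hw, rfl⟩
  by_cases hjk : j = k
  · subst hjk
    have := add_mem (hmem j w) hw
    simp only [convCoeff, lt_irrefl, if_false, if_true, Pi.single_eq_same, sub_add_cancel,
      LinearMap.smul_apply] at this
    exact (smul_mem_iff _ hlam0).mp this
  · simpa using add_mem (hoff j hjk ⟨w, rfl⟩) hw

theorem convRow_surjective [FiniteDimensional ℂ V] (hstarstar : CondStarStar M) (hlam0 : lam ≠ 0)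
    (k : Fin r) : Function.Surjective (convRow M lam k) := by
  rw [← range_eq_top]
  by_contra hne
  obtain ⟨f, hf, hle⟩ :=
    (range (convRow M lam k)).exists_le_ker_of_lt_top (lt_top_iff_ne_top.mpr hne)
  have hcodim : finrank ℂ (V ⧸ ker f) = 1 := by
    rw [(f.quotKerEquivOfSurjective (LinearMap.surjective hf)).finrank_eq, finrank_self]
  exact hstarstar k ⟨ker f, hcodim, invariant_of_range_convRow_le hlam0 hle⟩

theorem KLsub_le_comap_convOp_sub_one
    (h : ∀ k : Fin r, KLsub M lam ≤ (KLsub M lam).comap (convOp M lam k)) (k : Fin r) :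
    KLsub M lam ≤ (KLsub M lam).comap (convOp M lam k - 1) :=
  fun x hx ↦ show convOp M lam k x - x ∈ KLsub M lam from sub_mem (h k hx) hx

theorem mcOp_sub_one_pow (h : ∀ k : Fin r, KLsub M lam ≤ (KLsub M lam).comap (convOp M lam k))
    (k : Fin r) (n : ℕ) :
    (mcOp M lam h k - 1) ^ n = (KLsub M lam).mapQ _ ((convOp M lam k - 1) ^ n)
      ((KLsub M lam).le_comap_pow_of_le_comap (KLsub_le_comap_convOp_sub_one h k) n) := by
  rw [mapQ_pow _ (KLsub_le_comap_convOp_sub_one h k)]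
  congr 1
  ext x
  simp [mcOp]

theorem finrank_ker_mcOp_sub_one_pow_succ [FiniteDimensional ℂ V] (hstar : CondStar M)
    (hstarstar : CondStarStar M) (hlam0 : lam ≠ 0) (hlam1 : lam ≠ 1)
    (h : ∀ k : Fin r, KLsub M lam ≤ (KLsub M lam).comap (convOp M lam k)) (k : Fin r) (m : ℕ) :
    finrank ℂ (ker ((mcOp M lam h k - 1) ^ (m + 1))) + finrank ℂ (KLsub M lam) =
      finrank ℂ (ker (convRow M lam k)) + finrank ℂ (ker ((M k - lam⁻¹ • 1) ^ m)) +
        finrank ℂ (ker (M k - 1)) := by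
  rw [mcOp_sub_one_pow, finrank_ker_mapQ_add_finrank, convOp_sub_one_pow_succ, comap_comp,
    comap_comp, comap_single_KLsub hstar hlam0 hlam1,
    finrank_comap_of_le_range (range_eq_top.mpr (convRow_surjective hstarstar hlam0 k) ▸ le_top),
    finrank_comap_of_le_range ((M k).ker_sub_one_le_range_smul_sub_one_pow hlam1 m),
    (M k).ker_smul_sub_one_pow hlam0, add_assoc]

end Convolution

theorem middle_convolution_jordan_eigenvalue_one_general
    {V : Type*} [AddCommGroup V] [Module ℂ V] [FiniteDimensional ℂ V]
    {r : ℕ}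
    (M : Fin r → Module.End ℂ V)
    (hstar : CondStar M) (hstarstar : CondStarStar M)
    (lam : ℂ) (hlam0 : lam ≠ 0) (hlam1 : lam ≠ 1)
    (h : ∀ k : Fin r, KLsub M lam ≤ (KLsub M lam).comap (convOp M lam k))
    (k : Fin r) :
    ∀ l : ℕ, 2 ≤ l →
      (Module.finrank ℂ (LinearMap.ker ((mcOp M lam h k - 1) ^ l)) : ℤ) -
        (Module.finrank ℂ (LinearMap.ker ((mcOp M lam h k - 1) ^ (l - 1))) : ℤ) =
      (Module.finrank ℂ (LinearMap.ker ((M k - lam⁻¹ • 1) ^ (l - 1))) : ℤ) -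
        (Module.finrank ℂ (LinearMap.ker ((M k - lam⁻¹ • 1) ^ (l - 2))) : ℤ) := by
  intro l hl
  obtain ⟨m, rfl⟩ : ∃ m, l = m + 2 := ⟨l - 2, by omega⟩
  have hsucc := finrank_ker_mcOp_sub_one_pow_succ hstar hstarstar hlam0 hlam1 h k (m + 1)
  have hbase := finrank_ker_mcOp_sub_one_pow_succ hstar hstarstar hlam0 hlam1 h k m
  rw [show m + 2 - 1 = m + 1 by omega, Nat.add_sub_cancel, show m + 2 = m + 1 + 1 from rfl]
  omega

/-- for `λ ≠ 0, 1`, the Jordan blocks of `Ñ_k` with eigenvalue `1` and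
length `≥ 2` come exactly from the Jordan blocks `J(λ⁻¹, l−1)` of `M_k` (length raised
by one): for all `l ≥ 2`,
`dim ker((Ñ_k − 1)^l) − dim ker((Ñ_k − 1)^{l−1}) = dim ker((M_k − λ⁻¹)^{l−1}) − dim ker((M_k − λ⁻¹)^{l−2})`. -/
theorem middle_convolution_jordan_eigenvalue_one
    {V : Type*} [AddCommGroup V] [Module ℂ V] [FiniteDimensional ℂ V]
    {r : ℕ} (hr : 1 ≤ r)
    (M : Fin r → Module.End ℂ V) (hM : ∀ i : Fin r, Function.Bijective (M i))
    (hstar : CondStar M) (hstarstar : CondStarStar M)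
    (lam : ℂ) (hlam0 : lam ≠ 0) (hlam1 : lam ≠ 1)
    (h : ∀ k : Fin r, KLsub M lam ≤ (KLsub M lam).comap (convOp M lam k))
    (k : Fin r) :
    ∀ l : ℕ, 2 ≤ l →
      (Module.finrank ℂ (LinearMap.ker ((mcOp M lam h k - 1) ^ l)) : ℤ) -
        (Module.finrank ℂ (LinearMap.ker ((mcOp M lam h k - 1) ^ (l - 1))) : ℤ) =
      (Module.finrank ℂ (LinearMap.ker ((M k - lam⁻¹ • 1) ^ (l - 1))) : ℤ) -
        (Module.finrank ℂ (LinearMap.ker ((M k - lam⁻¹ • 1) ^ (l - 2))) : ℤ) :=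
  middle_convolution_jordan_eigenvalue_one_general M hstar hstarstar lam hlam0 hlam1 h k
end
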